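/- Let N be a prime, s ≥ 2, and let f₀ : ℤ/Nℤ → ℂ and f₁, …, f_m : (ℤ/Nℤ)² → ℂ be one-bounded functions. Define F(x) = 𝔼_y f₀(y) ∏_{i=1}^m f_i(x,y), and for h ∈ ℤ/Nℤ define F_h(x) = 𝔼_y ∏_{i=1}^m conj(f_i(x+h, y)) f_i(x, y). Then ‖F‖_{U^s}^{2^{s+1}} ≤ 𝔼_{h∈ℤ/Nℤ} ‖F_h‖_{U^{s-1}}^{2^{s-1}}. -/

import Mathlib

open Finset

noncomputable section

/-- The number of nonzero coordinates of `ω ∈ {0,1}^s`. -/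
def wt {s : ℕ} (ω : Fin s → Bool) : ℕ := (Finset.univ.filter fun i => ω i = true).card

/-- `C^k z`: complex conjugation applied `k` times. -/
def cconj (k : ℕ) (z : ℂ) : ℂ := if Even k then z else (starRingEnd ℂ) z

/-- The Gowers `U^s` norm of `f : ZMod N → ℂ`. -/
def gowers {N : ℕ} [NeZero N] (s : ℕ) (f : ZMod N → ℂ) : ℝ :=
  (‖(∑ x : ZMod N, ∑ h : Fin s → ZMod N,
      ∏ ω : Fin s → Bool,
        cconj (wt ω) (f (x + ∑ i, if ω i then h i else 0))) / (N : ℂ) ^ (s + 1)‖) ^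
    (((2 : ℝ) ^ s)⁻¹)

/-!
Write `F = 𝔼_y f₀(y) P(·, y)` with `P = ∏ᵢ fᵢ`. By the inductive formula for Gowers norms,
`‖F‖_{U^s}^{2^s}` is proportional to `∑_k |C_k F|²`, where
`C_k F = ∑_x ∏_ω C^{|ω|} F(x + ω·k)` is the cube sum over `{0,1}^{s-1}` in direction `k`.
Expanding `F` with one variable `Y(ω)` per vertex writes `C_k F` as an average over `Y` of the
cube sums `D_k(Y)` of the functions `P(·, Y(ω))`, weighted by the one-bounded coefficients
`∏_ω C^{|ω|} f₀(Y(ω))`; Cauchy–Schwarz bounds `|C_k F|²` by the average of `|D_k(Y)|²`.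
Applying the same expansion to `F_h` and summing over `h` produces exactly this average, so
`‖F‖_{U^s}^{2^s} ≤ 𝔼_h ‖F_h‖_{U^{s-1}}^{2^{s-1}}`, and the stated bound follows from
`‖F‖_{U^s} ≤ 1`.
-/

open ComplexConjugate

lemma cconj_mul (k : ℕ) (a b : ℂ) : cconj k (a * b) = cconj k a * cconj k b := by
  unfold cconj; split <;> simp

lemma cconj_sum {α : Type*} (s : Finset α) (k : ℕ) (g : α → ℂ) :
    cconj k (∑ i ∈ s, g i) = ∑ i ∈ s, cconj k (g i) := by
  unfold cconj; split <;> simp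

lemma cconj_div_natCast (k n : ℕ) (z : ℂ) : cconj k (z / n) = cconj k z / n := by
  unfold cconj; split <;> simp

lemma cconj_conj (k : ℕ) (z : ℂ) : cconj k (conj z) = conj (cconj k z) := by
  unfold cconj; split <;> simp

lemma norm_cconj (k : ℕ) (z : ℂ) : ‖cconj k z‖ = ‖z‖ := by
  unfold cconj; split <;> simp

lemma wt_cons {t : ℕ} (b : Bool) (ω : Fin t → Bool) :
    wt (Fin.cons b ω : Fin (t + 1) → Bool) = wt ω + if b then 1 else 0 := by
  simp only [wt, Finset.card_filter, Fin.sum_univ_succ, Fin.cons_zero, Fin.cons_succ]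
  ring

lemma cconj_wt_cons_false {t : ℕ} (ω : Fin t → Bool) (z : ℂ) :
    cconj (wt (Fin.cons false ω : Fin (t + 1) → Bool)) z = cconj (wt ω) z := by
  simp [wt_cons]

lemma cconj_wt_cons_true {t : ℕ} (ω : Fin t → Bool) (z : ℂ) :
    cconj (wt (Fin.cons true ω : Fin (t + 1) → Bool)) z = conj (cconj (wt ω) z) := by
  simp only [wt_cons, cconj, if_true, Nat.even_add_one]
  split_ifs <;> simp

lemma sum_sum_conj_shift_mul {G : Type*} [AddCommGroup G] [Fintype G] (A : G → ℂ) :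
    ∑ a, ∑ x, conj (A (x + a)) * A x = (‖∑ x, A x‖ ^ 2 : ℂ) := by
  have shift : ∀ x, ∑ a, A (x + a) = ∑ a, A a := fun x => Equiv.sum_comp (Equiv.addLeft x) A
  rw [Finset.sum_comm, ← Complex.conj_mul', Finset.mul_sum]
  refine Finset.sum_congr rfl fun x _ => ?_
  rw [← Finset.sum_mul, ← map_sum, shift]

section CubeSum

variable {G ι : Type*} [AddCommGroup G] {t : ℕ}

def cubeOffset (ω : Fin t → Bool) (h : Fin t → G) : G := ∑ i, if ω i then h i else 0

lemma cubeOffset_cons (b : Bool) (ω : Fin t → Bool) (a : G) (h : Fin t → G) :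
    cubeOffset (Fin.cons b ω : Fin (t + 1) → Bool) (Fin.cons a h) =
      (if b then a else 0) + cubeOffset ω h := by
  simp [cubeOffset, Fin.sum_univ_succ]

variable [Fintype G]

def cubeSum (F : (Fin t → Bool) → G → ℂ) (h : Fin t → G) : ℂ :=
  ∑ x, ∏ ω, cconj (wt ω) (F ω (x + cubeOffset ω h))

lemma cubeSum_cons (F : (Fin (t + 1) → Bool) → G → ℂ) (a : G) (h : Fin t → G) :
    cubeSum F (Fin.cons a h) =
      cubeSum (fun ω x => conj (F (Fin.cons true ω) (x + a)) * F (Fin.cons false ω) x) h := by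
  unfold cubeSum
  refine Finset.sum_congr rfl fun x _ => ?_
  rw [← (Fin.consEquiv fun _ => Bool).prod_comp, Fintype.prod_prod_type, Fintype.prod_bool,
    ← Finset.prod_mul_distrib]
  refine Finset.prod_congr rfl fun ω _ => ?_
  simp [Fin.consEquiv, cubeOffset_cons, cconj_mul, cconj_conj, cconj_wt_cons_true,
    cconj_wt_cons_false, add_assoc, add_comm a]

lemma sum_cubeSum_conj_shift_mul (F : (Fin t → Bool) → G → ℂ) (h : Fin t → G) :
    ∑ a, cubeSum (fun ω x => conj (F ω (x + a)) * F ω x) h = (‖cubeSum F h‖ ^ 2 : ℂ) := by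
  rw [cubeSum, ← sum_sum_conj_shift_mul]
  refine Finset.sum_congr rfl fun a _ => Finset.sum_congr rfl fun x _ => ?_
  simp only [cconj_mul, cconj_conj, Finset.prod_mul_distrib, map_prod, add_right_comm]

lemma sum_cubeSum_succ (F : G → ℂ) :
    ∑ h : Fin (t + 1) → G, cubeSum (fun _ => F) h =
      ∑ h : Fin t → G, (‖cubeSum (fun _ => F) h‖ ^ 2 : ℂ) := by
  rw [← (Fin.consEquiv fun _ => G).sum_comp, Fintype.sum_prod_type, Finset.sum_comm]
  refine Finset.sum_congr rfl fun h _ => ?_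
  simp only [Fin.consEquiv, Equiv.coe_fn_mk, cubeSum_cons]
  exact sum_cubeSum_conj_shift_mul (fun _ => F) h

lemma cubeSum_div_natCast (F : (Fin t → Bool) → G → ℂ) (n : ℕ) (h : Fin t → G) :
    cubeSum (fun ω x => F ω x / n) h = cubeSum F h / (n : ℂ) ^ 2 ^ t := by
  simp only [cubeSum, cconj_div_natCast, Finset.prod_div_distrib, Finset.prod_const,
    Finset.card_univ, Fintype.card_fun, Fintype.card_bool, Fintype.card_fin, Finset.sum_div]

lemma cubeSum_const_mul (c : (Fin t → Bool) → ℂ) (F : (Fin t → Bool) → G → ℂ) (h : Fin t → G) :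
    cubeSum (fun ω x => c ω * F ω x) h = (∏ ω, cconj (wt ω) (c ω)) * cubeSum F h := by
  simp only [cubeSum, cconj_mul, Finset.prod_mul_distrib, Finset.mul_sum]

lemma cubeSum_sum [Fintype ι] (F : (Fin t → Bool) → G → ι → ℂ) (h : Fin t → G) :
    cubeSum (fun ω x => ∑ y, F ω x y) h =
      ∑ Y : (Fin t → Bool) → ι, cubeSum (fun ω x => F ω x (Y ω)) h := by
  simp only [cubeSum, cconj_sum, Finset.prod_univ_sum, Fintype.piFinset_univ]
  exact Finset.sum_comm

lemma norm_cubeSum_le_card (F : (Fin t → Bool) → G → ℂ) (hF : ∀ ω x, ‖F ω x‖ ≤ 1) (h : Fin t → G) :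
    ‖cubeSum F h‖ ≤ Fintype.card G := by
  refine (norm_sum_le _ _).trans ?_
  rw [← nsmul_one, ← Finset.card_univ, ← Finset.sum_const]
  refine Finset.sum_le_sum fun x _ => ?_
  rw [norm_prod]
  exact Finset.prod_le_one (fun _ _ => norm_nonneg _) fun ω _ => (norm_cconj _ _).trans_le (hF _ _)

end CubeSum

lemma norm_sum_mul_sq_le {α : Type*} (s : Finset α) (a b : α → ℂ) (ha : ∀ i ∈ s, ‖a i‖ ≤ 1) :
    ‖∑ i ∈ s, a i * b i‖ ^ 2 ≤ #s * ∑ i ∈ s, ‖b i‖ ^ 2 := by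
  have h : ‖∑ i ∈ s, a i * b i‖ ≤ ∑ i ∈ s, ‖b i‖ := by
    refine (norm_sum_le _ _).trans (Finset.sum_le_sum fun i hi => ?_)
    rw [norm_mul]
    exact mul_le_of_le_one_left (norm_nonneg _) (ha i hi)
  calc ‖∑ i ∈ s, a i * b i‖ ^ 2 ≤ (∑ i ∈ s, ‖b i‖) ^ 2 := by gcongr
    _ ≤ #s * ∑ i ∈ s, ‖b i‖ ^ 2 := sq_sum_le_card_mul_sum_sq

section Average

variable {G ι : Type*} [AddCommGroup G] [Fintype G] [Fintype ι] [Nonempty ι] {t : ℕ}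

lemma norm_sq_cubeSum_average_le (f₀ : ι → ℂ) (hf₀ : ∀ y, ‖f₀ y‖ ≤ 1) (P : G → ι → ℂ)
    (h : Fin t → G) :
    ‖cubeSum (fun _ x => (∑ y, f₀ y * P x y) / Fintype.card ι) h‖ ^ 2 ≤
      (∑ Y : (Fin t → Bool) → ι, ‖cubeSum (fun ω x => P x (Y ω)) h‖ ^ 2) /
        (Fintype.card ι : ℝ) ^ 2 ^ t := by
  set n : ℝ := (Fintype.card ι : ℝ) ^ 2 ^ t
  have hn : 0 < n := by positivity
  have hcoef : ∀ Y ∈ (Finset.univ : Finset ((Fin t → Bool) → ι)),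
      ‖∏ ω, cconj (wt ω) (f₀ (Y ω))‖ ≤ 1 := fun Y _ => by
    rw [norm_prod]
    exact Finset.prod_le_one (fun _ _ => norm_nonneg _) fun ω _ => (norm_cconj _ _).trans_le (hf₀ _)
  have hcard : (#(Finset.univ : Finset ((Fin t → Bool) → ι)) : ℝ) = n := by
    simp [n, Finset.card_univ]
  simp only [cubeSum_div_natCast (fun _ x => ∑ y, f₀ y * P x y), cubeSum_sum, cubeSum_const_mul]
  rw [norm_div, norm_pow, Complex.norm_natCast, div_pow]
  calc _ ≤ n * (∑ Y : (Fin t → Bool) → ι, ‖cubeSum (fun ω x => P x (Y ω)) h‖ ^ 2) / n ^ 2 := by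
        gcongr
        rw [← hcard]
        exact norm_sum_mul_sq_le _ _ _ hcoef
    _ = _ := by field_simp

omit [Nonempty ι] in
lemma sum_sum_cubeSum_shift_average (P : G → ι → ℂ) :
    ∑ a, ∑ h : Fin t → G,
        cubeSum (fun _ x => (∑ y, conj (P (x + a) y) * P x y) / Fintype.card ι) h =
      ((∑ h : Fin t → G, (∑ Y : (Fin t → Bool) → ι, ‖cubeSum (fun ω x => P x (Y ω)) h‖ ^ 2) /
        (Fintype.card ι : ℝ) ^ 2 ^ t : ℝ) : ℂ) := by
  simp only [cubeSum_div_natCast, cubeSum_sum]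
  push_cast
  rw [Finset.sum_comm]
  refine Finset.sum_congr rfl fun h _ => ?_
  rw [← Finset.sum_div, Finset.sum_comm]
  congr 1
  exact Finset.sum_congr rfl fun Y _ => sum_cubeSum_conj_shift_mul (fun ω x => P x (Y ω)) h

lemma norm_sum_cubeSum_average_le (f₀ : ι → ℂ) (hf₀ : ∀ y, ‖f₀ y‖ ≤ 1) (P : G → ι → ℂ) :
    ‖∑ h : Fin (t + 1) → G, cubeSum (fun _ x => (∑ y, f₀ y * P x y) / Fintype.card ι) h‖ ≤
      ∑ a, ‖∑ h : Fin t → G,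
        cubeSum (fun _ x => (∑ y, conj (P (x + a) y) * P x y) / Fintype.card ι) h‖ := by
  calc _ = ∑ h : Fin t → G,
        ‖cubeSum (fun _ x => (∑ y, f₀ y * P x y) / Fintype.card ι) h‖ ^ 2 := by
        rw [sum_cubeSum_succ]
        norm_cast
        exact Real.norm_of_nonneg (by positivity)
    _ ≤ ∑ h : Fin t → G, (∑ Y : (Fin t → Bool) → ι, ‖cubeSum (fun ω x => P x (Y ω)) h‖ ^ 2) /
        (Fintype.card ι : ℝ) ^ 2 ^ t :=
        Finset.sum_le_sum fun h _ => norm_sq_cubeSum_average_le f₀ hf₀ P h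
    _ = ‖∑ a, ∑ h : Fin t → G,
        cubeSum (fun _ x => (∑ y, conj (P (x + a) y) * P x y) / Fintype.card ι) h‖ := by
        rw [sum_sum_cubeSum_shift_average, Complex.norm_real, Real.norm_of_nonneg (by positivity)]
    _ ≤ _ := norm_sum_le _ _

end Average

lemma norm_sum_div_card_le_one {ι : Type*} [Fintype ι] (g : ι → ℂ) (hg : ∀ y, ‖g y‖ ≤ 1) :
    ‖(∑ y, g y) / Fintype.card ι‖ ≤ 1 := by
  rw [norm_div, Complex.norm_natCast]
  refine div_le_one_of_le₀ ((norm_sum_le _ _).trans ?_) (Nat.cast_nonneg _)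
  simpa using Finset.sum_le_sum fun y (_ : y ∈ Finset.univ) => hg y

section Gowers

variable {N : ℕ} [NeZero N]

lemma gowers_nonneg (s : ℕ) (F : ZMod N → ℂ) : 0 ≤ gowers s F :=
  Real.rpow_nonneg (norm_nonneg _) _

lemma gowers_pow_two_pow (s : ℕ) (F : ZMod N → ℂ) :
    gowers s F ^ 2 ^ s = ‖∑ h : Fin s → ZMod N, cubeSum (fun _ => F) h‖ / (N : ℝ) ^ (s + 1) := by
  rw [gowers, show ((2 : ℝ) ^ s)⁻¹ = ((2 ^ s : ℕ) : ℝ)⁻¹ by push_cast; rfl,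
    Real.rpow_inv_natCast_pow (norm_nonneg _) (by positivity), Finset.sum_comm, norm_div, norm_pow,
    Complex.norm_natCast]
  rfl

lemma gowers_le_one (s : ℕ) (F : ZMod N → ℂ) (hF : ∀ x, ‖F x‖ ≤ 1) : gowers s F ≤ 1 := by
  have hsum : ‖∑ h : Fin s → ZMod N, cubeSum (fun _ => F) h‖ ≤ (N : ℝ) ^ (s + 1) := by
    refine (norm_sum_le _ _).trans ?_
    calc _ ≤ ∑ _h : Fin s → ZMod N, (N : ℝ) := Finset.sum_le_sum fun h _ => by
          simpa using norm_cubeSum_le_card (fun _ => F) (fun _ => hF) h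
      _ = (N : ℝ) ^ (s + 1) := by simp [pow_succ]
  rw [← pow_le_one_iff_of_nonneg (gowers_nonneg s F) (by positivity : 2 ^ s ≠ 0),
    gowers_pow_two_pow]
  exact div_le_one_of_le₀ hsum (by positivity)

lemma gowers_succ_pow_le (t : ℕ) (f₀ : ZMod N → ℂ) (hf₀ : ∀ y, ‖f₀ y‖ ≤ 1)
    (P : ZMod N → ZMod N → ℂ) :
    gowers (t + 1) (fun x => (∑ y, f₀ y * P x y) / N) ^ 2 ^ (t + 1) ≤
      (∑ a, gowers t (fun x => (∑ y, conj (P (x + a) y) * P x y) / N) ^ 2 ^ t) / N := by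
  have key := norm_sum_cubeSum_average_le (t := t) f₀ hf₀ P
  simp only [ZMod.card] at key
  simp only [gowers_pow_two_pow, ← Finset.sum_div, div_div, ← pow_succ]
  gcongr

end Gowers

theorem stmt12_general (N : ℕ) [NeZero N] (s : ℕ) (hs : 2 ≤ s) (m : ℕ)
    (f₀ : ZMod N → ℂ) (f : Fin m → ZMod N → ZMod N → ℂ)
    (hf₀ : ∀ y, ‖f₀ y‖ ≤ 1)
    (hf : ∀ i x y, ‖f i x y‖ ≤ 1) :
    gowers s (fun x => (∑ y : ZMod N, f₀ y * ∏ i, f i x y) / (N : ℂ)) ^ (2 ^ (s + 1)) ≤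
      (∑ h : ZMod N,
        gowers (s - 1)
          (fun x => (∑ y : ZMod N,
            ∏ i, (starRingEnd ℂ) (f i (x + h) y) * f i x y) / (N : ℂ)) ^ (2 ^ (s - 1))) /
        (N : ℝ) := by
  obtain ⟨t, rfl⟩ : ∃ t, s = t + 1 := ⟨s - 1, by omega⟩
  set F := fun x => (∑ y : ZMod N, f₀ y * ∏ i, f i x y) / (N : ℂ)
  have hF : ∀ x, ‖F x‖ ≤ 1 := fun x => by
    simpa [F] using norm_sum_div_card_le_one (fun y => f₀ y * ∏ i, f i x y) fun y => by
      rw [norm_mul, norm_prod]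
      exact mul_le_one₀ (hf₀ y) (Finset.prod_nonneg fun _ _ => norm_nonneg _)
        (Finset.prod_le_one (fun _ _ => norm_nonneg _) fun i _ => hf i x y)
  calc gowers (t + 1) F ^ 2 ^ (t + 1 + 1) ≤ gowers (t + 1) F ^ 2 ^ (t + 1) :=
        pow_le_pow_of_le_one (gowers_nonneg _ F) (gowers_le_one _ F hF)
          (Nat.pow_le_pow_right two_pos (Nat.le_succ _))
    _ ≤ _ := by
        simpa only [Finset.prod_mul_distrib, map_prod, Nat.add_sub_cancel] using
          gowers_succ_pow_le t f₀ hf₀ fun x y => ∏ i, f i x y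

theorem stmt12 (N : ℕ) [NeZero N] (hN : Nat.Prime N) (s : ℕ) (hs : 2 ≤ s) (m : ℕ)
    (f₀ : ZMod N → ℂ) (f : Fin m → ZMod N → ZMod N → ℂ)
    (hf₀ : ∀ y, ‖f₀ y‖ ≤ 1)
    (hf : ∀ i x y, ‖f i x y‖ ≤ 1) :
    gowers s (fun x => (∑ y : ZMod N, f₀ y * ∏ i, f i x y) / (N : ℂ)) ^ (2 ^ (s + 1)) ≤
      (∑ h : ZMod N,
        gowers (s - 1)
          (fun x => (∑ y : ZMod N,
            ∏ i, (starRingEnd ℂ) (f i (x + h) y) * f i x y) / (N : ℂ)) ^ (2 ^ (s - 1))) /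
        (N : ℝ) :=
  stmt12_general N s hs m f₀ f hf₀ hf

end
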